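/- arXiv:math/0301040 — 5 statements merged into one kernel-verified Lean document; each statement's English description precedes it below -/
import Mathlib

section
/- Let q : G → ℚ/ℤ be a quadratic function on an abelian group G, and let d_q(x) = q(x) - q(-x) be its homogeneity defect. Then for all n ∈ ℤ and x ∈ G, n²·q(x) - q(n·x) = (n(n-1)/2)·d_q(x). In particular, q is homogeneous (q(nx) = n²q(x) for all n, x) if and only if d_q = 0. -/
/-!
The hypothesis says that `polar q x y = q (x + y) - q x - q y` is additive in `x`, so
`polar q (n • x) x = n • polar q x x`. Hence `q ((n + 1) • x) = q (n • x) + q x + n • polar q x x`,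
which sums to `q (n • x) = n • q x + (n (n - 1) / 2) • polar q x x`. Taking `n = -1` gives
`q x - q (-x) = 2 • q x - polar q x x`, and the identity follows by comparing coefficients.
-/

theorem Int.mul_sub_one_ediv_two_add_one (n : ℤ) :
    (n + 1) * (n + 1 - 1) / 2 = n * (n - 1) / 2 + n := by
  rw [show (n + 1) * (n + 1 - 1) = n * (n - 1) + n * 2 by ring,
    Int.add_mul_ediv_right _ _ two_ne_zero]

namespace QuadraticMap

variable {G A : Type*} [AddCommGroup G] [AddCommGroup A] {q : G → A}

section PolarAddLeft

variable (hq : ∀ x₁ x₂ y : G, polar q (x₁ + x₂) y = polar q x₁ y + polar q x₂ y)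
include hq

theorem polar_zsmul_left_of_polar_add_left (n : ℤ) (x y : G) :
    polar q (n • x) y = n • polar q x y :=
  (AddMonoidHom.mk' (polar q · y) (hq · · y)).map_zsmul n x

theorem map_zero_of_polar_add_left : q 0 = 0 := by
  simpa [polar] using polar_zsmul_left_of_polar_add_left hq 0 0 0

theorem map_add_one_zsmul_of_polar_add_left (n : ℤ) (x : G) :
    q ((n + 1) • x) = q (n • x) + q x + n • polar q x x := by
  rw [add_one_zsmul, QuadraticMap.map_add q, polar_zsmul_left_of_polar_add_left hq]

theorem map_zsmul_of_polar_add_left (n : ℤ) (x : G) :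
    q (n • x) = n • q x + (n * (n - 1) / 2) • polar q x x := by
  have periodic : Function.Periodic
      (fun n : ℤ ↦ q (n • x) - n • q x - (n * (n - 1) / 2) • polar q x x) 1 := fun n ↦ by
    dsimp only
    rw [map_add_one_zsmul_of_polar_add_left hq, Int.mul_sub_one_ediv_two_add_one,
      add_zsmul, add_zsmul, one_zsmul]
    abel
  have h := periodic.int_mul_eq n
  simp only [Int.cast_id, mul_one, zero_smul, map_zero_of_polar_add_left hq, zero_mul,
    Int.zero_ediv, sub_zero] at h
  rw [← sub_eq_zero, ← h]
  abel

theorem map_neg_of_polar_add_left (x : G) : q (-x) = -q x + polar q x x := by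
  simpa using map_zsmul_of_polar_add_left hq (-1) x

theorem zsmul_sq_sub_map_zsmul_of_polar_add_left (n : ℤ) (x : G) :
    (n ^ 2) • q x - q (n • x) = (n * (n - 1) / 2) • (q x - q (-x)) := by
  have two_mul_half : n * (n - 1) / 2 * 2 = n * (n - 1) :=
    Int.ediv_mul_cancel (Int.even_mul_pred_self n).two_dvd
  rw [map_zsmul_of_polar_add_left hq, map_neg_of_polar_add_left hq]
  match_scalars
  · linear_combination -two_mul_half
  · ring

end PolarAddLeft

end QuadraticMap

/-- For a quadratic function `q` with homogeneity defect `d_q(x) = q x - q (-x)`,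
`n² q(x) - q(nx) = (n(n-1)/2) d_q(x)`, and `q` is homogeneous iff `d_q = 0`. -/
theorem stmt1 {G : Type*} [AddCommGroup G] (q : G → AddCircle (1 : ℚ))
    (hq : ∀ x₁ x₂ y : G,
      q (x₁ + x₂ + y) - q (x₁ + x₂) - q y =
        (q (x₁ + y) - q x₁ - q y) + (q (x₂ + y) - q x₂ - q y)) :
    (∀ (n : ℤ) (x : G), (n ^ 2) • q x - q (n • x) = (n * (n - 1) / 2) • (q x - q (-x)))
    ∧ ((∀ (n : ℤ) (x : G), q (n • x) = (n ^ 2) • q x) ↔ ∀ x : G, q x - q (-x) = 0) := by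
  have key := QuadraticMap.zsmul_sq_sub_map_zsmul_of_polar_add_left hq
  refine ⟨key, fun homogeneous x ↦ ?_, fun defect_zero n x ↦ ?_⟩
  · simpa [sub_eq_zero] using (homogeneous (-1) x).symm
  · simpa [defect_zero, sub_eq_zero, eq_comm] using key n x
end

section
/- Let (M,f) be a symmetric bilinear lattice with dual lattice M^♯ ⊆ V = M ⊗ ℚ. Then M^♯♯ = M + Ker(f̂_ℚ), where M^♯♯ = {x ∈ V : f_ℚ(x, M^♯) ⊆ ℤ}. -/
/-!
`F` descends to a nondegenerate symmetric form `B` on `V ⧸ Ker F`, and the dual of any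
`N ≤ V` is the preimage of the `B`-dual of the image of `N`. The image of `M` is a full lattice
in `V ⧸ Ker F`, so it has a `ℤ`-basis that is also a `ℚ`-basis, and the double dual of the span
of a basis is itself (via dual bases). Taking preimages, `M^♯♯` is the preimage of the image of
`M`, which is `M + Ker F`.
-/

/-- The dual lattice `M^♯ = {x ∈ V : F(x, M) ⊆ ℤ}`. -/
def dualLattice {V : Type*} [AddCommGroup V] [Module ℚ V]
    (F : V →ₗ[ℚ] V →ₗ[ℚ] ℚ) (M : Submodule ℤ V) : Submodule ℤ V where
  carrier := {x | ∀ m ∈ M, ∃ n : ℤ, (n : ℚ) = F x m}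
  add_mem' := by
    intro x y hx hy m hm
    obtain ⟨a, ha⟩ := hx m hm
    obtain ⟨b, hb⟩ := hy m hm
    exact ⟨a + b, by push_cast; simp [ha, hb]⟩
  zero_mem' := by
    intro m hm
    exact ⟨0, by simp⟩
  smul_mem' := by
    intro k x hx m hm
    obtain ⟨a, ha⟩ := hx m hm
    refine ⟨k * a, ?_⟩
    push_cast
    rw [ha]
    simp

open Module Submodule
open LinearMap (BilinForm)

section Lattice

variable {R S V W : Type*} [CommRing R] [Field S] [Algebra R S]
  [AddCommGroup V] [Module R V] [Module S V] [IsScalarTower R S V]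
  [AddCommGroup W] [Module R W] [Module S W] [IsScalarTower R S W]

theorem Submodule.IsLattice.map_of_surjective (N : Submodule R V) [IsLattice S N]
    {π : V →ₗ[S] W} (hπ : Function.Surjective π) :
    IsLattice S (N.map (π.restrictScalars R)) where
  fg := IsLattice.fg.map _
  span_eq_top := by
    rw [map_coe, LinearMap.coe_restrictScalars, span_image, IsLattice.span_eq_top,
      Submodule.map_top, LinearMap.range_eq_top.mpr hπ]

namespace LinearMap.BilinForm

theorem dualSubmodule_comp (B : BilinForm S W) (π : V →ₗ[S] W) (N : Submodule R V) :
    (B.comp π π).dualSubmodule N =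
      (B.dualSubmodule (N.map (π.restrictScalars R))).comap (π.restrictScalars R) := by
  ext x
  simp [mem_dualSubmodule]

variable [IsDomain R] [IsPrincipalIdealRing R] [IsFractionRing R S]

theorem dualSubmodule_dualSubmodule_of_isLattice (B : BilinForm S W) (hB : B.Nondegenerate)
    (hB' : B.IsSymm) (N : Submodule R W) [IsLattice S N] :
    B.dualSubmodule (B.dualSubmodule N) = N := by
  let b := (Free.chooseBasis R N).extendOfIsLattice S
  have hb : span R (Set.range b) = N := by
    have hb_eq : ⇑b = N.subtype ∘ Free.chooseBasis R N :=
      funext fun i ↦ Basis.extendOfIsLattice_apply S _ i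
    rw [hb_eq, Set.range_comp, span_image, Basis.span_eq, Submodule.map_top, range_subtype]
  rw [← hb]
  exact B.dualSubmodule_dualSubmodule_of_basis hB hB' b

theorem dualSubmodule_dualSubmodule_comp (B : BilinForm S W) (hB : B.Nondegenerate)
    (hB' : B.IsSymm) {π : V →ₗ[S] W} (hπ : Function.Surjective π) (N : Submodule R V)
    [IsLattice S N] :
    (B.comp π π).dualSubmodule ((B.comp π π).dualSubmodule N) =
      N ⊔ (LinearMap.ker π).restrictScalars R := by
  have := IsLattice.map_of_surjective N hπ
  rw [dualSubmodule_comp, dualSubmodule_comp,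
    map_comap_eq_of_surjective (f := π.restrictScalars R) hπ,
    dualSubmodule_dualSubmodule_of_isLattice B hB hB', comap_map_eq, LinearMap.ker_restrictScalars]

end LinearMap.BilinForm

end Lattice

namespace LinearMap

variable {R M P : Type*} [CommRing R] [AddCommGroup M] [Module R M] [AddCommGroup P] [Module R P]

theorem IsRefl.nondegenerate_liftQ₂_ker {B : M →ₗ[R] M →ₗ[R] P} (hB : B.IsRefl) :
    (hB.liftQ₂ B (ker B) le_rfl).Nondegenerate := by
  have hsep (x : M) (hx : ∀ y, B x y = 0) : Submodule.Quotient.mk (p := ker B) x = 0 :=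
    (Submodule.Quotient.mk_eq_zero _).mpr (LinearMap.ext hx)
  refine ⟨fun x hx ↦ ?_, fun y hy ↦ ?_⟩
  · induction x using Submodule.Quotient.induction_on with | _ x
    exact hsep x fun y ↦ hx (Submodule.Quotient.mk y)
  · induction y using Submodule.Quotient.induction_on with | _ y
    exact hsep y fun x ↦ hB x y (hy (Submodule.Quotient.mk x))

theorem BilinForm.IsSymm.liftQ₂ {B : BilinForm R M} (hB : B.IsSymm) (N : Submodule R M)
    (hN : N ≤ ker B) : BilinForm.IsSymm (hB.isRefl.liftQ₂ B N hN) := by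
  refine ⟨fun x y ↦ ?_⟩
  induction x using Submodule.Quotient.induction_on with | _ x
  induction y using Submodule.Quotient.induction_on with | _ y
  exact hB.eq x y

end LinearMap

theorem dualLattice_eq_dualSubmodule {V : Type*} [AddCommGroup V] [Module ℚ V]
    (F : V →ₗ[ℚ] V →ₗ[ℚ] ℚ) (M : Submodule ℤ V) :
    dualLattice F M = BilinForm.dualSubmodule F M := by
  ext x
  simp [dualLattice, BilinForm.mem_dualSubmodule, mem_one]

theorem stmt8_general {V : Type*} [AddCommGroup V] [Module ℚ V]
    (F : V →ₗ[ℚ] V →ₗ[ℚ] ℚ) (hsymm : ∀ x y : V, F x y = F y x)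
    (M : Submodule ℤ V) (hspan : Submodule.span ℚ (M : Set V) = ⊤) (hfg : M.FG) :
    dualLattice F (dualLattice F M) = M ⊔ (LinearMap.ker F).restrictScalars ℤ := by
  have hF : BilinForm.IsSymm F := ⟨hsymm⟩
  have : IsLattice ℚ M := ⟨hfg, hspan⟩
  rw [dualLattice_eq_dualSubmodule, dualLattice_eq_dualSubmodule, ← ker_mkQ (LinearMap.ker F)]
  -- `F` is definitionally the pullback of its descent to `V ⧸ Ker F` along the quotient map.
  exact BilinForm.dualSubmodule_dualSubmodule_comp _ hF.isRefl.nondegenerate_liftQ₂_ker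
    (hF.liftQ₂ _ le_rfl) (mkQ_surjective _) M

/-- `M^♯♯ = M + Ker f̂_ℚ`. -/
theorem stmt8 {V : Type*} [AddCommGroup V] [Module ℚ V] [FiniteDimensional ℚ V]
    (F : V →ₗ[ℚ] V →ₗ[ℚ] ℚ) (hsymm : ∀ x y : V, F x y = F y x)
    (M : Submodule ℤ V) (hspan : Submodule.span ℚ (M : Set V) = ⊤) (hfg : M.FG)
    (hint : ∀ x ∈ M, ∀ y ∈ M, ∃ n : ℤ, (n : ℚ) = F x y) :
    dualLattice F (dualLattice F M) = M ⊔ (LinearMap.ker F).restrictScalars ℤ :=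
  stmt8_general F hsymm M hspan hfg
end

section
/- Let (M,f) be a symmetric bilinear lattice. The cokernel of the inclusion of the torsion subgroup T Coker(f̂) into Coker(f̂) is isomorphic to Hom(Ker f̂, ℤ). -/
/-!
By rank–nullity, a map `f̂ : M → Hom(M, ℤ)` between finitely generated groups of the same rank
has cokernel and kernel of the same rank. Killing torsion does not change the rank of the
cokernel, and `Hom(Ker f̂, ℤ)` has the rank of `Ker f̂`. Both sides are finitely generated and
torsion-free, hence free abelian groups of the same rank.
-/

open Module Submodule LinearMap

universe u

theorem LinearMap.finrank_quotient_range_eq_finrank_ker {R : Type*} {M N : Type u} [Ring R]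
    [HasRankNullity.{u} R] [StrongRankCondition R] [AddCommGroup M] [Module R M]
    [AddCommGroup N] [Module R N]
    [Module.Finite R M] [Module.Finite R N] (f : M →ₗ[R] N) (h : finrank R M = finrank R N) :
    finrank R (N ⧸ range f) = finrank R (ker f) := by
  have hN := (range f).finrank_quotient_add_finrank
  have hM := (ker f).finrank_quotient_add_finrank
  rw [f.quotKerEquivRange.finrank_eq] at hM
  omega

theorem stmt15_general {M : Type*} [AddCommGroup M] [Module.Free ℤ M] [Module.Finite ℤ M]
    (f : M →ₗ[ℤ] M →ₗ[ℤ] ℤ) :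
    Nonempty
      ((((M →ₗ[ℤ] ℤ) ⧸ LinearMap.range f) ⧸
          Submodule.torsion ℤ ((M →ₗ[ℤ] ℤ) ⧸ LinearMap.range f)) ≃ₗ[ℤ]
        (↥(LinearMap.ker f) →ₗ[ℤ] ℤ)) := by
  apply FiniteDimensional.nonempty_linearEquiv_of_finrank_eq
  calc finrank ℤ (((M →ₗ[ℤ] ℤ) ⧸ range f) ⧸ torsion ℤ ((M →ₗ[ℤ] ℤ) ⧸ range f))
      = finrank ℤ ((M →ₗ[ℤ] ℤ) ⧸ range f) := finrank_quotient_eq_of_le_torsion le_rfl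
    _ = finrank ℤ (ker f) :=
        f.finrank_quotient_range_eq_finrank_ker (finrank_linearMap_self ℤ ℤ M).symm
    _ = finrank ℤ (ker f →ₗ[ℤ] ℤ) := (finrank_linearMap_self ℤ ℤ (ker f)).symm

/-- The cokernel of the inclusion `T Coker(f̂) ↪ Coker(f̂)` is isomorphic to
`Hom(Ker f̂, ℤ)`. -/
theorem stmt15 {M : Type*} [AddCommGroup M] [Module.Free ℤ M] [Module.Finite ℤ M]
    (f : M →ₗ[ℤ] M →ₗ[ℤ] ℤ) (hsymm : ∀ x y : M, f x y = f y x) :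
    Nonempty
      ((((M →ₗ[ℤ] ℤ) ⧸ LinearMap.range f) ⧸
          Submodule.torsion ℤ ((M →ₗ[ℤ] ℤ) ⧸ LinearMap.range f)) ≃ₗ[ℤ]
        (↥(LinearMap.ker f) →ₗ[ℤ] ℤ)) :=
  stmt15_general f
end

section
/- (Fundamental Lemma) Let q : G → ℚ/ℤ be a quadratic function on a torsion abelian group G, and let α ∈ G with 2α = 0 and q(α) = 0. Then the quadratic function α·q defined by (α·q)(x) = q(x) + b_q(α,x) is isomorphic to q; in fact q ∘ σ = α·q where σ is the automorphism σ(x) = x + n(x)α, with n(x) ∈ ℤ/2ℤ determined by n(x)/2 = b_q(α,x) ∈ ℚ/ℤ. -/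
/-- Fundamental Lemma: if `q` is a quadratic function on a torsion abelian
group, `α` satisfies `2α = 0` and `q(α) = 0`, then `α·q` is isomorphic to `q`
via the automorphism `σ(x) = x + n(x)α`, where `n(x) ∈ ℤ/2` is determined by
`n(x)/2 = b_q(α,x)`. -/
theorem stmt17 {G : Type*} [AddCommGroup G] (hG : AddMonoid.IsTorsion G)
    (q : G → AddCircle (1 : ℚ))
    (hq : ∀ x₁ x₂ y : G,
      q (x₁ + x₂ + y) - q (x₁ + x₂) - q y =
        (q (x₁ + y) - q x₁ - q y) + (q (x₂ + y) - q x₂ - q y))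
    (α : G) (hα : 2 • α = 0) (hqα : q α = 0)
    (n : G →+ ZMod 2)
    (hn : ∀ x : G, ((((n x).val : ℚ) / 2 : ℚ) : AddCircle (1 : ℚ))
      = q (α + x) - q α - q x) :
    ∃ ψ : G ≃+ G, (∀ x : G, ψ x = x + ((n x).val : ℤ) • α) ∧
      ∀ x : G, q (ψ x) = q x + (q (α + x) - q α - q x) := by
  have hαα : α + α = 0 := by rw [← two_nsmul]; exact hα
  have hzα : (2 : ℤ) • α = 0 := by rw [two_zsmul]; exact hαα
  have hq0 : q 0 = 0 := by
    have h := hq 0 0 0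
    simp only [add_zero, zero_add] at h
    abel_nf at h
    have h2 := sub_eq_zero_of_eq h
    rw [← sub_smul] at h2
    norm_num at h2
    exact h2
  have half_ne : (((1:ℚ)/2 : ℚ) : AddCircle (1:ℚ)) ≠ 0 := by
    intro h
    rw [AddCircle.coe_eq_zero_iff] at h
    obtain ⟨k, hk⟩ := h
    have : (k : ℚ) = 1/2 := by simpa using hk
    have h2 : ((2*k : ℤ) : ℚ) = 1 := by push_cast; linarith
    have : (2*k : ℤ) = 1 := by exact_mod_cast h2
    omega
  have hval01 : ∀ x : G, (n x).val = 0 ∨ (n x).val = 1 := by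
    intro x
    have := ZMod.val_lt (n x)
    omega
  have hnα : n α = 0 := by
    have h := hn α
    rw [hαα, hq0, hqα] at h
    simp only [sub_zero, zero_sub, neg_zero] at h
    rcases hval01 α with h0 | h1
    · exact (ZMod.val_eq_zero (n α)).mp h0
    · rw [h1] at h
      push_cast at h
      exact absurd h half_ne
  -- the map
  set f : G → G := fun x => x + ((n x).val : ℤ) • α with hf
  have hnf : ∀ x, n (f x) = n x := by
    intro x
    simp only [hf, map_add, map_zsmul, hnα, smul_zero, add_zero]
  have hff : ∀ x, f (f x) = x := by
    intro x
    simp only [hf]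
    have : n (x + ((n x).val : ℤ) • α) = n x := hnf x
    rw [this, add_assoc, ← add_zsmul, ← two_mul, mul_comm, mul_smul, hzα, smul_zero, add_zero]
  have hmod : ∀ m : ℕ, ((m % 2 : ℕ) : ℤ) • α = (m : ℤ) • α := by
    intro m
    conv_rhs => rw [← Nat.mod_add_div m 2]
    push_cast
    rw [add_smul, mul_comm, mul_smul, hzα, smul_zero, add_zero]
  have hadd : ∀ x y, f (x + y) = f x + f y := by
    intro x y
    simp only [hf, map_add]
    have : (((n x + n y).val : ℕ) : ℤ) • α
        = ((n x).val : ℤ) • α + ((n y).val : ℤ) • α := by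
      rw [ZMod.val_add, hmod]
      push_cast
      rw [add_smul]
    rw [this]
    abel
  let ψ : G ≃+ G :=
    { toFun := f, invFun := f, left_inv := hff, right_inv := hff,
      map_add' := hadd }
  refine ⟨ψ, fun x => rfl, ?_⟩
  intro x
  show q (f x) = q x + (q (α + x) - q α - q x)
  have hb : (((((n x).val : ℚ) / 2 : ℚ)) : AddCircle (1:ℚ)) = q (α + x) - q α - q x := hn x
  rcases hval01 x with h0 | h1
  · have hb0 : q (α + x) - q α - q x = 0 := by
      rw [← hb, h0]; norm_num
    simp only [hf, h0, Nat.cast_zero, zero_smul, add_zero, hb0]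
  · simp only [hf, h1, Nat.cast_one, one_smul]
    rw [hqα] at *
    have : q (x + α) = q (α + x) := by rw [add_comm]
    rw [this]
    abel
end

section
/- Let q : G → ℚ/ℤ and q' : G' → ℚ/ℤ be nondegenerate quadratic functions on finite abelian groups. Then q and q' are isomorphic if and only if there exists a group isomorphism ψ : G → G' such that b_q(x,y) = b_{q'}(ψx, ψy) for all x,y, d_q(x) = d_{q'}(ψx) for all x, and γ(q) = γ(q'). -/
/-!
Put `r := q' ∘ ψ - q`. Equal pairings make `r` a character of `G`, and equal homogeneity
defects force `2r = 0`. Substituting `x = z + y` in the double sum gives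
`γ(q + r) · conj γ(q) = ∑_{z : b_q(z, ·) = -r} e(q z + r z)`, and by nondegeneracy at most
one `z` qualifies; for `r = 0` this says `|γ(q)| = 1`. Hence `γ(q + r) = γ(q)` produces `z₀`
with `b_q(z₀, ·) = -r = r` and `q z₀ + r z₀ = 0`, so that `2z₀ = 0`, `q z₀ = 0` and
`(q + r)(x) = q(x + z₀)`. As the only nonzero value of `r` is `1/2`, the map
`x ↦ x + [r x ≠ 0] z₀` is an automorphism of `G`, and `q + r` composed with it is `q`.
-/

/-- The character `ℚ/ℤ → ℂ`, `r mod ℤ ↦ exp(2πir)`. -/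
noncomputable def eQZ : AddCircle (1 : ℚ) → ℂ :=
  Function.Periodic.lift (f := fun r : ℚ => Complex.exp (2 * Real.pi * Complex.I * (r : ℂ)))
    (by
      intro r
      simp only []
      push_cast
      rw [mul_add, mul_one, Complex.exp_add, Complex.exp_two_pi_mul_I, mul_one])

/-- The normalized Gauss sum `γ(q) = |G|^{-1/2} ∑ₓ exp(2πi q(x))`. -/
noncomputable def gaussSum' {G : Type*} [Fintype G] (q : G → AddCircle (1 : ℚ)) : ℂ :=
  ((Real.sqrt (Fintype.card G) : ℂ))⁻¹ * ∑ x, eQZ (q x)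

open QuadraticMap (polar)

theorem AddCircle.eq_of_two_nsmul_eq_zero {𝕜 : Type*} [Field 𝕜] [LinearOrder 𝕜]
    [IsStrictOrderedRing 𝕜] {p : 𝕜} [Fact (0 < p)] {a b : AddCircle p}
    (ha : 2 • a = 0) (hb : 2 • b = 0) (ha₀ : a ≠ 0) (hb₀ : b ≠ 0) : a = b := by
  have : Fact (Nat.Prime 2) := ⟨Nat.prime_two⟩
  have hunique : Subsingleton {u : AddCircle p // addOrderOf u = 2} :=
    (Nat.card_eq_one_iff_unique.mp (by simp)).1
  exact congrArg Subtype.val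
    (hunique.elim ⟨a, addOrderOf_eq_prime ha ha₀⟩ ⟨b, addOrderOf_eq_prime hb hb₀⟩)

section eQZ

theorem eQZ_coe (r : ℚ) :
    eQZ (r : AddCircle (1 : ℚ)) = Complex.exp (2 * Real.pi * Complex.I * (r : ℂ)) :=
  Function.Periodic.lift_coe _ _

theorem eQZ_zero : eQZ 0 = 1 := by
  simpa using eQZ_coe 0

theorem eQZ_add (a b : AddCircle (1 : ℚ)) : eQZ (a + b) = eQZ a * eQZ b := by
  induction a using QuotientAddGroup.induction_on
  induction b using QuotientAddGroup.induction_on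
  rw [← QuotientAddGroup.mk_add]
  simp only [eQZ_coe, ← Complex.exp_add]
  push_cast
  ring_nf

theorem eQZ_neg (a : AddCircle (1 : ℚ)) : eQZ (-a) = starRingEnd ℂ (eQZ a) := by
  induction a using QuotientAddGroup.induction_on with
  | H r =>
  rw [← QuotientAddGroup.mk_neg, eQZ_coe, eQZ_coe, ← Complex.exp_conj]
  simp only [map_mul, Complex.conj_I, Complex.conj_ofReal, map_ratCast, map_ofNat]
  push_cast
  ring_nf

theorem eQZ_eq_one_iff {a : AddCircle (1 : ℚ)} : eQZ a = 1 ↔ a = 0 := by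
  induction a using QuotientAddGroup.induction_on with
  | H r =>
  have h2πi : 2 * (Real.pi : ℂ) * Complex.I ≠ 0 := by simp [Real.pi_ne_zero]
  rw [eQZ_coe, Complex.exp_eq_one_iff, AddCircle.coe_eq_zero_iff]
  refine exists_congr fun n => ?_
  rw [mul_comm (n : ℂ), mul_right_inj' h2πi, zsmul_one, eq_comm]
  exact_mod_cast Iff.rfl

noncomputable def eQZChar : AddChar (AddCircle (1 : ℚ)) ℂ where
  toFun := eQZ
  map_zero_eq_one' := eQZ_zero
  map_add_eq_mul' := eQZ_add

theorem sum_eQZ_eq_zero {G : Type*} [AddCommGroup G] [Fintype G] {c : G →+ AddCircle (1 : ℚ)}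
    (hc : c ≠ 0) : ∑ x, eQZ (c x) = 0 := by
  refine (AddChar.sum_eq_zero_iff_ne_zero (ψ := eQZChar.compAddMonoidHom c)).mpr fun h => hc ?_
  ext x
  exact eQZ_eq_one_iff.mp (DFunLike.congr_fun h x)

end eQZ

theorem gaussSum'_comp_equiv {G G' : Type*} [Fintype G] [Fintype G']
    (q : G' → AddCircle (1 : ℚ)) (e : G ≃ G') : gaussSum' (q ∘ e) = gaussSum' q := by
  simp only [gaussSum', Function.comp_apply, Fintype.card_congr e,
    e.sum_comp fun x => eQZ (q x)]

theorem sum_eQZ_eq_of_gaussSum'_eq {G : Type*} [Fintype G] [Nonempty G]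
    {p q : G → AddCircle (1 : ℚ)} (h : gaussSum' p = gaussSum' q) :
    ∑ x, eQZ (p x) = ∑ x, eQZ (q x) := by
  refine mul_left_cancel₀ (inv_ne_zero ?_) h
  exact_mod_cast (Real.sqrt_pos.mpr (Nat.cast_pos.mpr Fintype.card_pos)).ne'

section QuadraticFunction

variable {G A : Type*} [AddCommGroup G] [AddCommGroup A]

def IsQuadraticFunction (q : G → A) : Prop :=
  ∀ x₁ x₂ y, polar q (x₁ + x₂) y = polar q x₁ y + polar q x₂ y

def PolarNondegenerate (q : G → A) : Prop :=
  ∀ x, (∀ y, polar q x y = 0) → x = 0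

namespace IsQuadraticFunction

variable {q : G → A}

theorem map_zero (hq : IsQuadraticFunction q) : q 0 = 0 := by
  have h : polar q 0 0 = 0 := by simpa using hq 0 0 0
  simpa [polar] using h

theorem polar_add_right (hq : IsQuadraticFunction q) (x y₁ y₂ : G) :
    polar q x (y₁ + y₂) = polar q x y₁ + polar q x y₂ := by
  simpa only [QuadraticMap.polar_comm q x] using hq y₁ y₂ x

def polarHom (hq : IsQuadraticFunction q) : G →+ G →+ A :=
  AddMonoidHom.mk' (fun x => AddMonoidHom.mk' (polar q x) (hq.polar_add_right x))
    fun x₁ x₂ => AddMonoidHom.ext (hq x₁ x₂)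

@[simp]
theorem polarHom_apply (hq : IsQuadraticFunction q) (x y : G) : hq.polarHom x y = polar q x y := rfl

theorem polarHom_injective (hq : IsQuadraticFunction q) (hnd : PolarNondegenerate q) :
    Function.Injective hq.polarHom :=
  (injective_iff_map_eq_zero _).mpr fun x hx => hnd x fun y => DFunLike.congr_fun hx y

end IsQuadraticFunction

open Classical in
theorem exists_addEquiv_apply_eq_ite (φ : G →+ A) {z : G} (hz : z + z = 0) (hφz : φ z = 0)
    (hφ : ∀ x y, φ x ≠ 0 → φ y ≠ 0 → φ (x + y) = 0) :
    ∃ α : G ≃+ G, ∀ x, α x = if φ x = 0 then x else x + z := by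
  set f : G → G := fun x => if φ x = 0 then x else x + z
  have hinv : Function.Involutive f := by
    intro x
    by_cases hx : φ x = 0
    · simp [f, hx]
    · have hxz : φ (x + z) ≠ 0 := by rwa [map_add, hφz, add_zero]
      simp only [f, if_neg hx, if_neg hxz, add_assoc, hz, add_zero]
  have hadd : ∀ x y, f (x + y) = f x + f y := by
    intro x y
    by_cases hx : φ x = 0 <;> by_cases hy : φ y = 0
    · simp [f, hx, hy]
    · simp [f, hx, hy, add_assoc]
    · simp [f, hx, hy, add_right_comm]
    · simp only [f, if_neg hx, if_neg hy, if_pos (hφ x y hx hy)]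
      rw [add_add_add_comm, hz, add_zero]
  exact ⟨AddEquiv.mk' hinv.toPerm hadd, fun x => rfl⟩

theorem exists_addEquiv_add_comp_eq {q : G → A} (hq : IsQuadraticFunction q)
    (hnd : PolarNondegenerate q) (r : G →+ A) (hr₂ : ∀ x, r x + r x = 0)
    (hr : ∀ x y, r x ≠ 0 → r y ≠ 0 → r (x + y) = 0) {z₀ : G}
    (hz₀ : hq.polarHom z₀ + r = 0) (hqz₀ : q z₀ + r z₀ = 0) :
    ∃ α : G ≃+ G, ∀ x, q (α x) + r (α x) = q x := by
  have hpolar : ∀ y, polar q z₀ y = r y := fun y => by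
    rw [← hq.polarHom_apply, eq_neg_of_add_eq_zero_left (DFunLike.congr_fun hz₀ y),
      neg_eq_of_add_eq_zero_left (hr₂ y)]
  have hz₂ : z₀ + z₀ = 0 := hnd _ fun y => by rw [hq, hpolar, hr₂]
  have hrz₀ : r z₀ = 0 := by
    have h := hpolar z₀
    simp only [polar, hz₂, hq.map_zero, eq_neg_of_add_eq_zero_left hqz₀, sub_neg_eq_add,
      zero_add] at h
    simpa [hr₂] using h.symm
  have hqz₀' : q z₀ = 0 := by rwa [hrz₀, add_zero] at hqz₀
  have hshift : ∀ x, q (x + z₀) = q x + r x := fun x => by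
    rw [QuadraticMap.map_add q x z₀, QuadraticMap.polar_comm, hpolar, hqz₀', add_zero]
  obtain ⟨α, hα⟩ := exists_addEquiv_apply_eq_ite r hz₂ hrz₀ hr
  refine ⟨α, fun x => ?_⟩
  rw [hα]
  split_ifs with hx
  · rw [hx, add_zero]
  · rw [← hshift, add_assoc, hz₂, add_zero]

end QuadraticFunction

section GaussSum

variable {G : Type*} [AddCommGroup G] [Fintype G] {q : G → AddCircle (1 : ℚ)}

theorem IsQuadraticFunction.sum_eQZ_add_mul_conj (hq : IsQuadraticFunction q)
    (r : G →+ AddCircle (1 : ℚ)) :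
    (∑ x, eQZ (q x + r x)) * starRingEnd ℂ (∑ x, eQZ (q x)) =
      ∑ z, eQZ (q z + r z) * ∑ y, eQZ ((hq.polarHom z + r) y) := by
  calc _ = ∑ y, ∑ z, eQZ (q (z + y) + r (z + y) - q y) := by
          rw [map_sum, Finset.sum_mul_sum, Finset.sum_comm]
          refine Finset.sum_congr rfl fun y _ => ?_
          rw [← Equiv.sum_comp (Equiv.addRight y)]
          simp [sub_eq_add_neg, eQZ_add, eQZ_neg]
    _ = ∑ y, ∑ z, eQZ (q z + r z) * eQZ ((hq.polarHom z + r) y) := by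
          refine Finset.sum_congr rfl fun y _ => Finset.sum_congr rfl fun z _ => ?_
          rw [← eQZ_add, AddMonoidHom.add_apply, hq.polarHom_apply, map_add,
            QuadraticMap.map_add q z y]
          abel_nf
    _ = _ := by
          rw [Finset.sum_comm]
          simp_rw [Finset.mul_sum]

theorem IsQuadraticFunction.sum_eQZ_add_mul_conj_eq (hq : IsQuadraticFunction q)
    (hnd : PolarNondegenerate q) (r : G →+ AddCircle (1 : ℚ)) {z₀ : G}
    (hz₀ : hq.polarHom z₀ + r = 0) :
    (∑ x, eQZ (q x + r x)) * starRingEnd ℂ (∑ x, eQZ (q x)) =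
      Fintype.card G * eQZ (q z₀ + r z₀) := by
  rw [hq.sum_eQZ_add_mul_conj, Finset.sum_eq_single z₀]
  · simp [hz₀, eQZ_zero, mul_comm]
  · intro z _ hz
    refine mul_eq_zero_of_right _ (sum_eQZ_eq_zero fun h => hz ?_)
    exact hq.polarHom_injective hnd (add_right_cancel (h.trans hz₀.symm))
  · simp

theorem IsQuadraticFunction.sum_eQZ_mul_conj_self (hq : IsQuadraticFunction q)
    (hnd : PolarNondegenerate q) :
    (∑ x, eQZ (q x)) * starRingEnd ℂ (∑ x, eQZ (q x)) = Fintype.card G := by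
  simpa [hq.map_zero, eQZ_zero] using hq.sum_eQZ_add_mul_conj_eq hnd 0 (z₀ := 0) (by simp)

theorem IsQuadraticFunction.exists_polarHom_add_eq_zero (hq : IsQuadraticFunction q)
    (hnd : PolarNondegenerate q) (r : G →+ AddCircle (1 : ℚ))
    (hsum : ∑ x, eQZ (q x + r x) = ∑ x, eQZ (q x)) :
    ∃ z, hq.polarHom z + r = 0 ∧ q z + r z = 0 := by
  have hcard : (Fintype.card G : ℂ) ≠ 0 := Nat.cast_ne_zero.mpr Fintype.card_ne_zero
  obtain ⟨z₀, hz₀⟩ : ∃ z₀, hq.polarHom z₀ + r = 0 := by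
    by_contra! hnone
    have hzero : (∑ x, eQZ (q x + r x)) * starRingEnd ℂ (∑ x, eQZ (q x)) = 0 := by
      rw [hq.sum_eQZ_add_mul_conj]
      exact Finset.sum_eq_zero fun z _ => mul_eq_zero_of_right _ (sum_eQZ_eq_zero (hnone z))
    rw [hsum, hq.sum_eQZ_mul_conj_self hnd] at hzero
    exact hcard hzero
  refine ⟨z₀, hz₀, eQZ_eq_one_iff.mp (mul_left_cancel₀ hcard ?_)⟩
  rw [← hq.sum_eQZ_add_mul_conj_eq hnd r hz₀, hsum, hq.sum_eQZ_mul_conj_self hnd, mul_one]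

end GaussSum

theorem exists_addEquiv_comp_eq_of_gaussSum'_eq {G : Type*} [AddCommGroup G] [Fintype G]
    {p q : G → AddCircle (1 : ℚ)} (hq : IsQuadraticFunction q)
    (hnd : PolarNondegenerate q) (hpolar : ∀ x y, polar p x y = polar q x y)
    (hdefect : ∀ x, p x - p (-x) = q x - q (-x)) (hγ : gaussSum' p = gaussSum' q) :
    ∃ α : G ≃+ G, ∀ x, p (α x) = q x := by
  let r : G →+ AddCircle (1 : ℚ) := AddMonoidHom.mk' (p - q) fun x y => by
    simp only [Pi.sub_apply, QuadraticMap.map_add p x y, QuadraticMap.map_add q x y, hpolar]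
    abel
  have hp : ∀ x, p x = q x + r x := fun x => (add_sub_cancel _ _).symm
  have hr₂ : ∀ x, r x + r x = 0 := fun x => by
    have h : r x - r (-x) = 0 := by
      simp only [r, AddMonoidHom.mk'_apply, Pi.sub_apply]
      rw [sub_sub_sub_comm, hdefect, sub_self]
    rwa [map_neg, sub_neg_eq_add] at h
  have hr : ∀ x y, r x ≠ 0 → r y ≠ 0 → r (x + y) = 0 := fun x y hx hy => by
    rw [map_add, AddCircle.eq_of_two_nsmul_eq_zero (by rw [two_nsmul, hr₂])
      (by rw [two_nsmul, hr₂]) hx hy, hr₂]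
  have hsum : ∑ x, eQZ (q x + r x) = ∑ x, eQZ (q x) := by
    simpa only [hp] using sum_eQZ_eq_of_gaussSum'_eq hγ
  obtain ⟨z₀, hz₀, hqz₀⟩ := hq.exists_polarHom_add_eq_zero hnd r hsum
  obtain ⟨α, hα⟩ := exists_addEquiv_add_comp_eq hq hnd r hr₂ hr hz₀ hqz₀
  exact ⟨α, fun x => (hp _).trans (hα x)⟩

theorem stmt19_general {G G' : Type*} [AddCommGroup G] [Fintype G]
    [AddCommGroup G'] [Fintype G']
    (q : G → AddCircle (1 : ℚ)) (q' : G' → AddCircle (1 : ℚ))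
    (hq : ∀ x₁ x₂ y : G,
      q (x₁ + x₂ + y) - q (x₁ + x₂) - q y =
        (q (x₁ + y) - q x₁ - q y) + (q (x₂ + y) - q x₂ - q y))
    (hnd : ∀ x : G, (∀ y : G, q (x + y) - q x - q y = 0) → x = 0) :
    (∃ ψ : G ≃+ G', ∀ x : G, q' (ψ x) = q x) ↔
      ∃ ψ : G ≃+ G',
        (∀ x y : G, q (x + y) - q x - q y = q' (ψ x + ψ y) - q' (ψ x) - q' (ψ y))
        ∧ (∀ x : G, q x - q (-x) = q' (ψ x) - q' (-(ψ x)))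
        ∧ gaussSum' q = gaussSum' q' := by
  constructor
  · rintro ⟨ψ, hψ⟩
    refine ⟨ψ, fun x y => ?_, fun x => ?_, ?_⟩
    · rw [← map_add, hψ, hψ, hψ]
    · rw [← map_neg, hψ, hψ]
    · rw [← gaussSum'_comp_equiv q' ψ.toEquiv]
      exact congrArg gaussSum' (funext fun x => (hψ x).symm)
  · rintro ⟨ψ, hpolar, hdefect, hγ⟩
    obtain ⟨α, hα⟩ := exists_addEquiv_comp_eq_of_gaussSum'_eq (p := q' ∘ ψ) hq hnd
      (fun x y => by simp [polar, hpolar])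
      (fun x => by simp [hdefect])
      (by rw [hγ]; exact gaussSum'_comp_equiv q' ψ.toEquiv)
    exact ⟨α.trans ψ, hα⟩

/-- Two nondegenerate quadratic functions `q, q'` on finite abelian groups are
isomorphic iff there is a group isomorphism `ψ` matching the associated
bilinear pairings and homogeneity defects, and `γ(q) = γ(q')`. -/
theorem stmt19 {G G' : Type*} [AddCommGroup G] [Fintype G]
    [AddCommGroup G'] [Fintype G']
    (q : G → AddCircle (1 : ℚ)) (q' : G' → AddCircle (1 : ℚ))
    (hq : ∀ x₁ x₂ y : G,
      q (x₁ + x₂ + y) - q (x₁ + x₂) - q y =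
        (q (x₁ + y) - q x₁ - q y) + (q (x₂ + y) - q x₂ - q y))
    (hq' : ∀ x₁ x₂ y : G',
      q' (x₁ + x₂ + y) - q' (x₁ + x₂) - q' y =
        (q' (x₁ + y) - q' x₁ - q' y) + (q' (x₂ + y) - q' x₂ - q' y))
    (hnd : ∀ x : G, (∀ y : G, q (x + y) - q x - q y = 0) → x = 0)
    (hnd' : ∀ x : G', (∀ y : G', q' (x + y) - q' x - q' y = 0) → x = 0) :
    (∃ ψ : G ≃+ G', ∀ x : G, q' (ψ x) = q x) ↔
      ∃ ψ : G ≃+ G',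
        (∀ x y : G, q (x + y) - q x - q y = q' (ψ x + ψ y) - q' (ψ x) - q' (ψ y))
        ∧ (∀ x : G, q x - q (-x) = q' (ψ x) - q' (-(ψ x)))
        ∧ gaussSum' q = gaussSum' q' :=
  stmt19_general q q' hq hnd
end
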